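/- Let a ≥ b ≥ 1 with gcd(a,b) = 1 and a ≥ 6, and let S = {0, a, a+b}. Then π({S, -S}) ≤ (a+1)/(3a) < 2/5, where -S = {0, -a, -(a+b)} is the reflection of S. -/

import Mathlib

/-- A shooting pattern `X` hits a ship `S` if every translate of `S` intersects `X`. -/
def Hits (X S : Set ℤ) : Prop := ∀ n : ℤ, ∃ s ∈ S, n + s ∈ X

/-- Lower asymptotic density of a set of integers. -/
noncomputable def lowerDensity (X : Set ℤ) : ℝ :=
  Filter.liminf (fun N : ℕ =>
    ((X ∩ Set.Icc (-(N:ℤ)) (N:ℤ)).ncard : ℝ) / (2 * N + 1)) Filter.atTop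

/-- Optimal piercing density of a family of ships. -/
noncomputable def piercing (F : Set (Set ℤ)) : ℝ :=
  sInf (lowerDensity '' {X | ∀ S ∈ F, Hits X S})

/-!
Since `a` and `b` are coprime, every integer is uniquely `i * b + j * a` with `0 ≤ i < a`, which
lays `ℤ` out on a slab of width `a`. There the ship `{0, a, a + b}` and its reflection become
L-triominoes `{(i, j), (i, j + 1), (i + 1, j + 1)}`, except that a step past column `a - 1`
re-enters column `0` shifted by `b` rows. The diagonal pattern `i + j ≡ 0 (mod 3)` hits every
L-triomino inside the slab, and adding the cells `j ≡ b - a (mod 3)` of column `0` repairs the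
wrap-around. The resulting pattern is `3a`-periodic with `a + 1` points per period.
-/

open Filter Topology

theorem ncard_inter_Icc_le (X : Set ℤ) (N : ℕ) :
    (X ∩ Set.Icc (-(N : ℤ)) N).ncard ≤ 2 * N + 1 :=
  calc (X ∩ Set.Icc (-(N : ℤ)) N).ncard
      ≤ (Set.Icc (-(N : ℤ)) N).ncard := Set.ncard_le_ncard Set.inter_subset_right
    _ = 2 * N + 1 := by rw [← Finset.coe_Icc, Set.ncard_coe_finset, Int.card_Icc]; omega

theorem lowerDensity_nonneg (X : Set ℤ) : 0 ≤ lowerDensity X := by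
  refine le_liminf_of_le (isBoundedUnder_of ⟨1, fun N => ?_⟩).isCoboundedUnder_ge
    (Eventually.of_forall fun N => by positivity)
  exact div_le_one_of_le₀ (by exact_mod_cast ncard_inter_Icc_le X N) (by positivity)

theorem piercing_le_lowerDensity {F : Set (Set ℤ)} {X : Set ℤ} (hX : ∀ S ∈ F, Hits X S) :
    piercing F ≤ lowerDensity X :=
  csInf_le ⟨0, by rintro _ ⟨Y, -, rfl⟩; exact lowerDensity_nonneg Y⟩ ⟨X, hX, rfl⟩

theorem lowerDensity_le_of_ncard_le {X : Set ℤ} {c C : ℝ}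
    (h : ∀ N : ℕ, ((X ∩ Set.Icc (-(N : ℤ)) N).ncard : ℝ) ≤ c * (2 * N + 1) + C) :
    lowerDensity X ≤ c := by
  have hg : Tendsto (fun N : ℕ => c + C / (2 * N + 1)) atTop (𝓝 c) := by
    have h2N : Tendsto (fun N : ℕ => 2 * (N : ℝ) + 1) atTop atTop :=
      tendsto_atTop_add_const_right _ 1 (tendsto_natCast_atTop_atTop.const_mul_atTop two_pos)
    simpa using tendsto_const_nhds.add (tendsto_const_nhds.div_atTop h2N)
  rw [lowerDensity, ← hg.liminf_eq]
  refine liminf_le_liminf (Eventually.of_forall fun N => ?_)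
    (isBoundedUnder_of ⟨0, fun N => by positivity⟩) hg.isBoundedUnder_le.isCoboundedUnder_ge
  rw [div_le_iff₀ (by positivity), add_mul, div_mul_cancel₀ _ (by positivity)]
  exact h N

/-- Two points of `[-N, N]` in the same block of length `p` with the same image under `f`
coincide, so `x ↦ (block of x, f x)` is injective. -/
theorem ncard_inter_Icc_le_of_dvd_sub {β : Type*} {X : Set ℤ} (f : ℤ → β) (T : Finset β)
    {p : ℕ} (hf : ∀ x y, f x = f y → (p : ℤ) ∣ x - y) (hX : Set.MapsTo f X T) (N : ℕ) :
    (X ∩ Set.Icc (-(N : ℤ)) N).ncard ≤ (2 * N / p + 1) * T.card := by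
  have hmaps : ∀ x ∈ X ∩ Set.Icc (-(N : ℤ)) N,
      ((x + N).toNat / p, f x) ∈ (↑(Finset.range (2 * N / p + 1) ×ˢ T) : Set (ℕ × β)) := by
    rintro x ⟨hxX, hx₁, hx₂⟩
    simp only [Finset.coe_product, Set.mem_prod, Finset.mem_coe, Finset.mem_range]
    exact ⟨Nat.lt_succ_of_le (Nat.div_le_div_right (by omega)), hX hxX⟩
  have hinj : Set.InjOn (fun x : ℤ => ((x + N).toNat / p, f x)) (X ∩ Set.Icc (-(N : ℤ)) N) := by
    rintro x ⟨-, hx₁, hx₂⟩ y ⟨-, hy₁, hy₂⟩ hxy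
    simp only [Prod.mk.injEq] at hxy
    have hmod : (x + N).toNat % p = (y + N).toNat % p := by
      refine Nat.modEq_iff_dvd.2 ?_
      rw [show ((y + N).toNat : ℤ) - (x + N).toNat = y - x by omega]
      exact hf y x hxy.2.symm
    have := Nat.div_add_mod (x + N).toNat p
    have := Nat.div_add_mod (y + N).toNat p
    rw [hxy.1, hmod] at *
    omega
  calc (X ∩ Set.Icc (-(N : ℤ)) N).ncard ≤ _ := Set.ncard_le_ncard_of_injOn _ hmaps hinj
    _ = (2 * N / p + 1) * T.card := by
      rw [Set.ncard_coe_finset, Finset.card_product, Finset.card_range]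

theorem lowerDensity_le_of_mapsTo {β : Type*} {X : Set ℤ} (f : ℤ → β) (T : Finset β) {p : ℤ}
    (hp : 0 ≤ p) (hf : ∀ x y, f x = f y → p ∣ x - y) (hX : Set.MapsTo f X T) :
    lowerDensity X ≤ T.card / p := by
  lift p to ℕ using hp
  push_cast
  refine lowerDensity_le_of_ncard_le (C := T.card) fun N => ?_
  calc ((X ∩ Set.Icc (-(N : ℤ)) N).ncard : ℝ)
      ≤ (((2 * N / p : ℕ) : ℝ) + 1) * T.card := by
        exact_mod_cast ncard_inter_Icc_le_of_dvd_sub f T hf hX N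
    _ ≤ (2 * N / p + 1) * T.card := by gcongr; exact_mod_cast Nat.cast_div_le
    _ = T.card / p * (2 * N + 1) + T.card - T.card / p := by ring
    _ ≤ T.card / p * (2 * N + 1) + T.card := by
        linarith [show (0 : ℝ) ≤ T.card / p by positivity]

section Slab

variable {a b : ℤ}

theorem exists_slab_repr (hab : IsCoprime a b) (ha : 0 < a) (x : ℤ) :
    ∃ i j, 0 ≤ i ∧ i < a ∧ x = i * b + j * a := by
  obtain ⟨u, v, huv⟩ := hab
  refine ⟨x * v % a, x * u + x * v / a * b, Int.emod_nonneg _ ha.ne', Int.emod_lt_of_pos _ ha, ?_⟩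
  rw [Int.emod_def]
  linear_combination (-x) * huv

theorem slab_repr_unique (hab : IsCoprime a b) {i j i' j' : ℤ} (hi : 0 ≤ i) (hia : i < a)
    (hi' : 0 ≤ i') (hi'a : i' < a) (h : i * b + j * a = i' * b + j' * a) : i = i' ∧ j = j' := by
  have hdvd : a ∣ i - i' := hab.dvd_of_dvd_mul_right ⟨j' - j, by linear_combination h⟩
  obtain rfl : i = i' :=
    sub_eq_zero.1 (Int.eq_zero_of_abs_lt_dvd hdvd (abs_lt.2 ⟨by omega, by omega⟩))
  exact ⟨rfl, mul_right_cancel₀ (by omega : a ≠ 0) (by linarith)⟩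

/-- Cell `(i, j)` of the slab: the diagonals `i + j ≡ 0 (mod 3)`, together with the cells of the
first column that the translate by `a + b` reaches from the uncovered cells of the last one. -/
def IsPatternCell (a b i j : ℤ) : Prop :=
  (i + j) % 3 = 0 ∨ (i = 0 ∧ (j + a - b) % 3 = 0)

def slabPattern (a b : ℤ) : Set ℤ :=
  {x | ∃ i j, 0 ≤ i ∧ i < a ∧ x = i * b + j * a ∧ IsPatternCell a b i j}

theorem mem_slabPattern_of {i j x : ℤ} (hi : 0 ≤ i) (hia : i < a) (hx : x = i * b + j * a)
    (hc : IsPatternCell a b i j) : x ∈ slabPattern a b :=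
  ⟨i, j, hi, hia, hx, hc⟩

theorem hits_slabPattern (hab : IsCoprime a b) (ha : 0 < a) :
    Hits (slabPattern a b) {0, a, a + b} := by
  intro n
  obtain ⟨i, j, hi, hia, rfl⟩ := exists_slab_repr hab ha n
  simp only [Set.mem_insert_iff, Set.mem_singleton_iff, exists_eq_or_imp, exists_eq_left]
  by_cases hlast : i + 1 < a
  · have : IsPatternCell a b i j ∨ IsPatternCell a b i (j + 1) ∨
        IsPatternCell a b (i + 1) (j + 1) := by unfold IsPatternCell; omega
    rcases this with h | h | h
    · exact .inl (mem_slabPattern_of hi hia (by ring) h)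
    · exact .inr (.inl (mem_slabPattern_of hi hia (by ring) h))
    · exact .inr (.inr (mem_slabPattern_of (by omega) hlast (by ring) h))
  · obtain rfl : i = a - 1 := by omega
    have : IsPatternCell a b (a - 1) j ∨ IsPatternCell a b (a - 1) (j + 1) ∨
        IsPatternCell a b 0 (j + 1 + b) := by unfold IsPatternCell; omega
    rcases this with h | h | h
    · exact .inl (mem_slabPattern_of hi hia (by ring) h)
    · exact .inr (.inl (mem_slabPattern_of hi hia (by ring) h))
    · exact .inr (.inr (mem_slabPattern_of le_rfl ha (by ring) h))

theorem hits_neg_slabPattern (hab : IsCoprime a b) (ha : 0 < a) :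
    Hits (slabPattern a b) {0, -a, -(a + b)} := by
  intro n
  obtain ⟨i, j, hi, hia, rfl⟩ := exists_slab_repr hab ha n
  simp only [Set.mem_insert_iff, Set.mem_singleton_iff, exists_eq_or_imp, exists_eq_left]
  by_cases hfirst : 0 < i
  · have : IsPatternCell a b i j ∨ IsPatternCell a b i (j - 1) ∨
        IsPatternCell a b (i - 1) (j - 1) := by unfold IsPatternCell; omega
    rcases this with h | h | h
    · exact .inl (mem_slabPattern_of hi hia (by ring) h)
    · exact .inr (.inl (mem_slabPattern_of hi hia (by ring) h))
    · exact .inr (.inr (mem_slabPattern_of (by omega) (by omega) (by ring) h))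
  · obtain rfl : i = 0 := by omega
    have : IsPatternCell a b 0 j ∨ IsPatternCell a b 0 (j - 1) ∨
        IsPatternCell a b (a - 1) (j - 1 - b) := by unfold IsPatternCell; omega
    rcases this with h | h | h
    · exact .inl (mem_slabPattern_of hi hia (by ring) h)
    · exact .inr (.inl (mem_slabPattern_of hi hia (by ring) h))
    · exact .inr (.inr (mem_slabPattern_of (by omega) (by omega) (by ring) h))

theorem lowerDensity_slabPattern_le (hab : IsCoprime a b) (ha : 0 < a) :
    lowerDensity (slabPattern a b) ≤ (a + 1) / (3 * a) := by
  choose i j hi hia hx using exists_slab_repr hab ha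
  set T : Finset (ℤ × ℤ) :=
    (Finset.Ico 1 a).image (fun k => (k, -k % 3)) ∪ {(0, 0), (0, (b - a) % 3)}
  have hT : (T.card : ℤ) ≤ a + 1 := by
    have : T.card ≤ (Finset.Ico 1 a).card + 2 :=
      (Finset.card_union_le _ _).trans (add_le_add Finset.card_image_le Finset.card_le_two)
    rw [Int.card_Ico] at this
    omega
  have hmaps : Set.MapsTo (fun x => (i x, j x % 3)) (slabPattern a b) T := by
    rintro x ⟨i', j', hi', hi'a, rfl, hc⟩
    obtain ⟨h1, h2⟩ := slab_repr_unique hab hi' hi'a (hi _) (hia _) (hx (i' * b + j' * a))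
    simp only [Finset.coe_union, Finset.coe_image, Finset.coe_insert, Finset.coe_singleton,
      Set.mem_union, Set.mem_image, Set.mem_insert_iff, Set.mem_singleton_iff, Finset.coe_Ico,
      Set.mem_Ico, Prod.mk.injEq, ← h1, ← h2, T]
    unfold IsPatternCell at hc
    by_cases h0 : i' = 0
    · right; omega
    · left; exact ⟨i', ⟨by omega, hi'a⟩, rfl, by omega⟩
  have hdvd : ∀ x y, (i x, j x % 3) = (i y, j y % 3) → 3 * a ∣ x - y := by
    intro x y hxy
    simp only [Prod.mk.injEq] at hxy
    have hxy' : x - y = (j x - j y) * a := by linear_combination hx x - hx y + b * hxy.1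
    rw [hxy']
    exact mul_dvd_mul_right (by omega) a
  calc lowerDensity (slabPattern a b) ≤ T.card / ((3 * a : ℤ) : ℝ) :=
        lowerDensity_le_of_mapsTo _ T (by omega) hdvd hmaps
    _ ≤ (a + 1) / (3 * a) := by push_cast; gcongr; exact_mod_cast hT

end Slab

theorem stmt12_general (a b : ℤ) (ha : 6 ≤ a)
    (hcop : IsCoprime a b) :
    piercing {({0, a, a + b} : Set ℤ), ({0, -a, -(a + b)} : Set ℤ)} ≤ (a + 1 : ℝ) / (3 * a) ∧
    (a + 1 : ℝ) / (3 * a) < 2 / 5 := by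
  have ha' : (6 : ℝ) ≤ a := by exact_mod_cast ha
  refine ⟨?_, by rw [div_lt_iff₀ (by positivity)]; linarith⟩
  calc piercing _ ≤ lowerDensity (slabPattern a b) := by
        refine piercing_le_lowerDensity ?_
        rintro S (rfl | rfl)
        · exact hits_slabPattern hcop (by omega)
        · exact hits_neg_slabPattern hcop (by omega)
    _ ≤ (a + 1) / (3 * a) := lowerDensity_slabPattern_le hcop (by omega)

theorem stmt12 (a b : ℤ) (hb : 1 ≤ b) (hba : b ≤ a) (ha : 6 ≤ a)
    (hcop : IsCoprime a b) :
    piercing {({0, a, a + b} : Set ℤ), ({0, -a, -(a + b)} : Set ℤ)} ≤ (a + 1 : ℝ) / (3 * a) ∧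
    (a + 1 : ℝ) / (3 * a) < 2 / 5 :=
  stmt12_general a b ha hcop
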